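/- arXiv:2302.12127 — 7 statements merged into one kernel-verified Lean document; each statement's English description precedes it below -/
import Mathlib

section
/- Let Ω be a nonempty finite set and 𝒫 a nonempty set of pmfs on Ω. Write M(x) = sup_{p∈𝒫} p(x) and C(𝒫) = Σ_{x∈Ω} M(x). Then (i) for every pmf r on Ω there exists x ∈ Ω with M(x) ≥ C(𝒫)·r(x), and (ii) the NML pmf q_𝒫(x) = M(x)/C(𝒫) satisfies M(x) = C(𝒫)·q_𝒫(x) for every x ∈ Ω. Consequently the minimax value min over pmfs r of max_{x∈Ω} M(x)/r(x) equals C(𝒫) and is attained by the NML pmf; i.e., the NML code attains the minimax regret, and the minimax regret equals the parametric complexity log C(𝒫). -/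
/-- A probability mass function on a finite set. -/
def IsPmf {Ω : Type*} [Fintype Ω] (p : Ω → ℝ) : Prop :=
  (∀ x, 0 ≤ p x) ∧ ∑ x, p x = 1

/-- `M(x) = sup_{p ∈ 𝒫} p(x)`, the maximum likelihood value. -/
noncomputable def nmlNum {Ω : Type*} [Fintype Ω] (P : Set (Ω → ℝ)) (x : Ω) : ℝ :=
  ⨆ p : P, (p : Ω → ℝ) x

/-- The parametric complexity `C(𝒫) = Σ_x sup_{p ∈ 𝒫} p(x)`. -/
noncomputable def paramComplexity {Ω : Type*} [Fintype Ω] (P : Set (Ω → ℝ)) : ℝ :=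
  ∑ x, nmlNum P x

/-- The normalized maximum likelihood (NML) pmf of `𝒫`. -/
noncomputable def nmlPmf {Ω : Type*} [Fintype Ω] (P : Set (Ω → ℝ)) (x : Ω) : ℝ :=
  nmlNum P x / paramComplexity P

/-- The NML code attains the minimax regret, which equals the parametric complexity:
(i) for every pmf `r` there is some `x` with `M(x) ≥ C(𝒫)·r(x)`, and
(ii) the NML pmf `q_𝒫` is a pmf satisfying `M(x) = C(𝒫)·q_𝒫(x)` for every `x`. -/
theorem nml_attains_minimax_regret {Ω : Type*} [Fintype Ω] [Nonempty Ω]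
    (P : Set (Ω → ℝ)) (hPne : P.Nonempty) (hP : ∀ p ∈ P, IsPmf p) :
    (∀ r : Ω → ℝ, IsPmf r → ∃ x, paramComplexity P * r x ≤ nmlNum P x) ∧
    IsPmf (nmlPmf P) ∧
    (∀ x, nmlNum P x = paramComplexity P * nmlPmf P x) := by
  obtain ⟨p₀, hp₀⟩ := hPne
  have hbdd : ∀ x : Ω, BddAbove (Set.range fun p : P => (p : Ω → ℝ) x) := by
    intro x
    refine ⟨1, ?_⟩
    rintro _ ⟨⟨p, hp⟩, rfl⟩
    obtain ⟨hnn, hsum⟩ := hP p hp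
    calc p x ≤ ∑ y, p y := Finset.single_le_sum (fun y _ => hnn y) (Finset.mem_univ x)
    _ = 1 := hsum
  have hle : ∀ (p : Ω → ℝ), p ∈ P → ∀ x, p x ≤ nmlNum P x := by
    intro p hp x
    exact le_ciSup (hbdd x) ⟨p, hp⟩
  have hMnn : ∀ x, 0 ≤ nmlNum P x := fun x =>
    le_trans ((hP p₀ hp₀).1 x) (hle p₀ hp₀ x)
  have hC1 : (1 : ℝ) ≤ paramComplexity P := by
    rw [← (hP p₀ hp₀).2]
    exact Finset.sum_le_sum fun x _ => hle p₀ hp₀ x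
  have hC0 : 0 < paramComplexity P := lt_of_lt_of_le one_pos hC1
  refine ⟨?_, ⟨?_, ?_⟩, ?_⟩
  · intro r hr
    by_contra h
    push_neg at h
    have hsum : ∑ x, nmlNum P x < ∑ x, paramComplexity P * r x :=
      Finset.sum_lt_sum_of_nonempty Finset.univ_nonempty fun x _ => h x
    rw [← Finset.mul_sum, hr.2, mul_one] at hsum
    exact lt_irrefl _ hsum
  · intro x
    exact div_nonneg (hMnn x) hC0.le
  · rw [show (nmlPmf P) = fun x => nmlNum P x / paramComplexity P from rfl]
    rw [← Finset.sum_div]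
    exact div_self hC0.ne'
  · intro x
    rw [nmlPmf, mul_div_cancel₀ _ hC0.ne']
end

section
/- Let Ω be a nonempty finite set, U ⊆ ℝ^k an open set, θ0 ∈ U, and p : U × Ω → ℝ such that for every θ ∈ U the function p(θ,·) is a pmf on Ω with p(θ,x) > 0 for all x, and for every x ∈ Ω the map θ ↦ p(θ,x) is twice continuously differentiable on U. Define the Kullback–Leibler divergence F(θ) = Σ_{x∈Ω} p(θ0,x) · log( p(θ0,x) / p(θ,x) ) and the Fisher information matrix I(θ0) = − Σ_{x∈Ω} p(θ0,x) · Hess_θ log p(θ,x) |_{θ=θ0}. Then F admits the second-order expansion F(θ) = (1/2) (θ−θ0)ᵀ I(θ0) (θ−θ0) + o(‖θ−θ0‖²) as θ → θ0; in particular F(θ0) = 0, ∇F(θ0) = 0, and the Hessian of F at θ0 equals I(θ0). -/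
/-!
On a neighbourhood of `θ0` the divergence is `F θ = G θ0 - G θ` with
`G θ = Σ_x p(θ0,x) log p(θ,x)`, so `F` is `C²` there. Its gradient at `θ0` is minus the expected
score `Σ_x p(θ0,x) ∇ log p(θ,x)|_{θ0} = Σ_x ∇ p(θ,x)|_{θ0} = ∇ (Σ_x p(θ,x)) = 0`, its Hessian is
minus the expected Hessian of the log-likelihood, i.e. the Fisher information, and the expansion is
the second-order Taylor formula with Peano remainder.
-/

open Asymptotics

open Filter Topology Real

section

variable {E F : Type*} [NormedAddCommGroup E] [NormedSpace ℝ E]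
  [NormedAddCommGroup F] [NormedSpace ℝ F]

/-- The remainder has derivative `f' y - f' a - f'' a (y - a) = o(‖y - a‖)` (this uses the
symmetry of `f'' a`), so the mean value inequality makes the remainder itself `o(‖x - a‖²)`. -/
theorem ContDiffAt.isLittleO_taylor_two {f : E → F} {a : E} (hf : ContDiffAt ℝ 2 f a) :
    (fun x => f x - f a - fderiv ℝ f a (x - a)
      - (1 / 2 : ℝ) • fderiv ℝ (fderiv ℝ f) a (x - a) (x - a)) =o[𝓝 a]
      fun x => ‖x - a‖ ^ 2 := by
  set H := fderiv ℝ (fderiv ℝ f) a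
  have hH : HasFDerivAt (fderiv ℝ f) H a :=
    ((hf.fderiv_right (m := 1) le_rfl).differentiableAt one_ne_zero).hasFDerivAt
  have hsymm : ∀ v w, H v w = H w v :=
    hf.isSymmSndFDerivAt (by simp [minSmoothness_of_isRCLikeNormedField])
  obtain ⟨r, hr, hball⟩ := Metric.mem_nhds_iff.1 (hf.eventually (by simp))
  have hquad (y : E) :
      HasFDerivAt (fun x => (1 / 2 : ℝ) • H (x - a) (x - a)) (H (y - a)) y := by
    have hsub := (hasFDerivAt_id (𝕜 := ℝ) y).sub_const a
    refine ((H.hasFDerivAt.comp y hsub).clm_apply hsub).const_smul (1 / 2 : ℝ)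
      |>.congr_fderiv ?_
    ext v
    simp only [id_eq, Function.comp_apply, ContinuousLinearMap.comp_id, add_apply, smul_apply,
      ContinuousLinearMap.flip_apply]
    rw [hsymm v]
    module
  have hderiv : ∀ y ∈ Metric.ball a r, HasFDerivWithinAt
      (fun x => f x - f a - fderiv ℝ f a (x - a) - (1 / 2 : ℝ) • H (x - a) (x - a))
      (fderiv ℝ f y - fderiv ℝ f a - H (y - a)) (Metric.ball a r) y := by
    intro y hy
    have hfy := ((show ContDiffAt ℝ 2 f y from hball hy).differentiableAt two_ne_zero).hasFDerivAt
    have hlin := (fderiv ℝ f a).hasFDerivAt.comp y ((hasFDerivAt_id (𝕜 := ℝ) y).sub_const a)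
    exact (((hfy.sub_const (f a)).sub hlin).sub (hquad y)).hasFDerivWithinAt
  have hnhds : 𝓝[Metric.ball a r] a = 𝓝 a :=
    Metric.isOpen_ball.nhdsWithin_eq (Metric.mem_ball_self hr)
  have hsmall : (fun y => fderiv ℝ f y - fderiv ℝ f a - H (y - a)) =o[𝓝[Metric.ball a r] a]
      fun y => ‖y - a‖ ^ 1 := by
    simpa only [hnhds, pow_one] using hH.isLittleO.norm_right
  simpa [hnhds] using
    (convex_ball a r).isLittleO_pow_succ (Metric.mem_ball_self hr) hderiv hsmall

variable {Ω : Type*} [Fintype Ω]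

theorem sum_mul_log_div (a : Ω → ℝ) {q : Ω → ℝ} (hq : ∀ x, q x ≠ 0) :
    ∑ x, a x * log (a x / q x) = ∑ x, a x * log (a x) - ∑ x, a x * log (q x) := by
  rw [← Finset.sum_sub_distrib]
  refine Finset.sum_congr rfl fun x _ => ?_
  rcases eq_or_ne (a x) 0 with ha | ha
  · simp [ha]
  · rw [log_div ha (hq x), mul_sub]

theorem fderiv_sum_smul {f : Ω → E → F} {θ : E} (a : Ω → ℝ)
    (hf : ∀ x, DifferentiableAt ℝ (f x) θ) :
    fderiv ℝ (fun θ => ∑ x, a x • f x θ) θ = ∑ x, a x • fderiv ℝ (f x) θ := by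
  rw [fderiv_fun_sum fun x _ => (hf x).fun_const_smul (a x)]
  exact Finset.sum_congr rfl fun x _ => fderiv_fun_const_smul (hf x) (a x)

theorem sum_smul_fderiv_log_eq_zero {p : E → Ω → ℝ} {θ0 : E}
    (hp : ∀ x, DifferentiableAt ℝ (fun θ => p θ x) θ0) (hpos : ∀ x, p θ0 x ≠ 0)
    (hsum : (fun θ => ∑ x, p θ x) =ᶠ[𝓝 θ0] fun _ => 1) :
    ∑ x, p θ0 x • fderiv ℝ (fun θ => log (p θ x)) θ0 = 0 :=
  calc ∑ x, p θ0 x • fderiv ℝ (fun θ => log (p θ x)) θ0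
      = ∑ x, fderiv ℝ (fun θ => p θ x) θ0 := by
        refine Finset.sum_congr rfl fun x _ => ?_
        rw [((hp x).hasFDerivAt.log (hpos x)).fderiv, smul_smul, mul_inv_cancel₀ (hpos x),
          one_smul]
    _ = fderiv ℝ (fun θ => ∑ x, p θ x) θ0 := (fderiv_fun_sum fun x _ => hp x).symm
    _ = 0 := by rw [hsum.fderiv_eq, fderiv_const_apply]

end

theorem kl_second_order_expansion_general {k : ℕ} {Ω : Type*} [Fintype Ω]
    (U : Set (EuclideanSpace ℝ (Fin k))) (hU : IsOpen U)
    (θ0 : EuclideanSpace ℝ (Fin k)) (hθ0 : θ0 ∈ U)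
    (p : EuclideanSpace ℝ (Fin k) → Ω → ℝ)
    (hpmf : ∀ θ ∈ U, IsPmf (p θ))
    (hpos : ∀ θ ∈ U, ∀ x, 0 < p θ x)
    (hC2 : ∀ x, ContDiffOn ℝ 2 (fun θ => p θ x) U)
    (F : EuclideanSpace ℝ (Fin k) → ℝ)
    (hF : F = fun θ => ∑ x, p θ0 x * Real.log (p θ0 x / p θ x))
    (I : EuclideanSpace ℝ (Fin k) →L[ℝ] EuclideanSpace ℝ (Fin k) →L[ℝ] ℝ)
    (hI : I = -∑ x, p θ0 x •
        fderiv ℝ (fun θ => fderiv ℝ (fun θ' => Real.log (p θ' x)) θ) θ0) :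
    F θ0 = 0 ∧
    fderiv ℝ F θ0 = 0 ∧
    fderiv ℝ (fun θ => fderiv ℝ F θ) θ0 = I ∧
    (fun θ => F θ - (1 / 2) * I (θ - θ0) (θ - θ0)) =o[nhds θ0]
      (fun θ => ‖θ - θ0‖ ^ 2) := by
  have hU0 : U ∈ 𝓝 θ0 := hU.mem_nhds hθ0
  have hlog (x : Ω) : ContDiffOn ℝ 2 (fun θ => log (p θ x)) U :=
    (hC2 x).log fun θ hθ => (hpos θ hθ x).ne'
  set G := fun θ => ∑ x, p θ0 x * log (p θ x)
  have hFG : F =ᶠ[𝓝 θ0] fun θ => G θ0 - G θ := eventually_of_mem hU0 fun θ hθ =>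
    hF ▸ sum_mul_log_div _ fun x => (hpos θ hθ x).ne'
  have hdF : fderiv ℝ F =ᶠ[𝓝 θ0]
      fun θ => -∑ x, p θ0 x • fderiv ℝ (fun θ' => log (p θ' x)) θ := by
    filter_upwards [hFG.fderiv (𝕜 := ℝ), hU0] with θ hθ hθU
    rw [hθ, fderiv_const_sub]
    exact congrArg _ <| fderiv_sum_smul (f := fun x θ => log (p θ x)) _ fun x =>
      ((hlog x).contDiffAt (hU.mem_nhds hθU)).differentiableAt two_ne_zero
  have hdscore (x : Ω) : DifferentiableAt ℝ (fderiv ℝ fun θ => log (p θ x)) θ0 :=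
    (((hlog x).contDiffAt hU0).fderiv_right (m := 1) le_rfl).differentiableAt one_ne_zero
  have hF0 : F θ0 = 0 := by simp [hFG.eq_of_nhds]
  have hdF0 : fderiv ℝ F θ0 = 0 := by
    rw [hdF.eq_of_nhds, sum_smul_fderiv_log_eq_zero
      (fun x => ((hC2 x).contDiffAt hU0).differentiableAt two_ne_zero)
      (fun x => (hpos θ0 hθ0 x).ne') (eventually_of_mem hU0 fun θ hθ => (hpmf θ hθ).2),
      neg_zero]
  have hd2F0 : fderiv ℝ (fun θ => fderiv ℝ F θ) θ0 = I := by
    rw [hdF.fderiv_eq, fderiv_fun_neg, fderiv_sum_smul _ hdscore, hI]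
  have hFC2 : ContDiffAt ℝ 2 F θ0 :=
    (contDiffAt_const.sub ((ContDiffOn.sum fun x _ => contDiffOn_const.mul (hlog x)).contDiffAt
      hU0)).congr_of_eventuallyEq hFG
  refine ⟨hF0, hdF0, hd2F0, ?_⟩
  simpa [hF0, hdF0, hd2F0] using hFC2.isLittleO_taylor_two

/-- Second-order expansion of the Kullback–Leibler divergence
`F(θ) = Σ_x p(θ0,x)·log(p(θ0,x)/p(θ,x))` around `θ0`: its value and gradient vanish at
`θ0`, its Hessian at `θ0` equals the Fisher information matrix
`I(θ0) = −Σ_x p(θ0,x)·Hess_θ log p(θ,x)|_{θ0}`, and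
`F(θ) = (1/2)(θ−θ0)ᵀ I(θ0) (θ−θ0) + o(‖θ−θ0‖²)` as `θ → θ0`. -/
theorem kl_second_order_expansion {k : ℕ} {Ω : Type*} [Fintype Ω] [Nonempty Ω]
    (U : Set (EuclideanSpace ℝ (Fin k))) (hU : IsOpen U)
    (θ0 : EuclideanSpace ℝ (Fin k)) (hθ0 : θ0 ∈ U)
    (p : EuclideanSpace ℝ (Fin k) → Ω → ℝ)
    (hpmf : ∀ θ ∈ U, IsPmf (p θ))
    (hpos : ∀ θ ∈ U, ∀ x, 0 < p θ x)
    (hC2 : ∀ x, ContDiffOn ℝ 2 (fun θ => p θ x) U)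
    (F : EuclideanSpace ℝ (Fin k) → ℝ)
    (hF : F = fun θ => ∑ x, p θ0 x * Real.log (p θ0 x / p θ x))
    (I : EuclideanSpace ℝ (Fin k) →L[ℝ] EuclideanSpace ℝ (Fin k) →L[ℝ] ℝ)
    (hI : I = -∑ x, p θ0 x •
        fderiv ℝ (fun θ => fderiv ℝ (fun θ' => Real.log (p θ' x)) θ) θ0) :
    F θ0 = 0 ∧
    fderiv ℝ F θ0 = 0 ∧
    fderiv ℝ (fun θ => fderiv ℝ F θ) θ0 = I ∧
    (fun θ => F θ - (1 / 2) * I (θ - θ0) (θ - θ0)) =o[nhds θ0]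
      (fun θ => ‖θ - θ0‖ ^ 2) :=
  kl_second_order_expansion_general U hU θ0 hθ0 p hpmf hpos hC2 F hF I hI
end

section
/- Let s ≥ 1 and let π_1, …, π_s be nonnegative reals with Σ_{i=1}^s π_i = 1. Let m_1, …, m_s : (0,1) → ℝ be functions with m_i(ε) > 0 for all ε ∈ (0,1), and suppose that for each i, log m_i(ε) / log(1/ε) → d_i as ε → 0⁺, for some real d_i. Then liminf_{ε→0⁺} log( Σ_{i=1}^s π_i m_i(ε) ) / log(1/ε) ≥ Σ_{i=1}^s π_i d_i. (This is the Jensen-inequality lower bound showing that the descriptive dimensionality of a model fusion is at least the π-weighted average of the descriptive dimensionalities of the component model classes.) -/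
open Filter

/-- Jensen-inequality lower bound on the descriptive dimensionality of a model fusion:
if `log m_i(ε)/log(1/ε) → d_i` as `ε → 0⁺` for each `i` and `π` is a probability vector,
then `liminf_{ε→0⁺} log(Σ_i π_i m_i(ε))/log(1/ε) ≥ Σ_i π_i d_i`. -/
theorem ddim_model_fusion_lower_bound {s : ℕ} (hs : 1 ≤ s)
    (w : Fin s → ℝ) (hw : ∀ i, 0 ≤ w i) (hwsum : ∑ i, w i = 1)
    (m : Fin s → ℝ → ℝ) (hm : ∀ i, ∀ ε ∈ Set.Ioo (0 : ℝ) 1, 0 < m i ε)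
    (d : Fin s → ℝ)
    (hd : ∀ i, Tendsto (fun ε => Real.log (m i ε) / Real.log (1 / ε))
      (nhdsWithin 0 (Set.Ioi (0 : ℝ))) (nhds (d i))) :
    ∑ i, w i * d i ≤
      liminf (fun ε => Real.log (∑ i, w i * m i ε) / Real.log (1 / ε))
        (nhdsWithin 0 (Set.Ioi (0 : ℝ))) := by
  set l := nhdsWithin (0:ℝ) (Set.Ioi 0) with hl
  set f : ℝ → ℝ := fun ε => Real.log (∑ i, w i * m i ε) / Real.log (1/ε) with hfdef
  set g : ℝ → ℝ := fun ε => ∑ i, w i * (Real.log (m i ε) / Real.log (1/ε)) with hgdef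
  have h01 : Set.Ioo (0:ℝ) 1 ∈ l := Ioo_mem_nhdsGT_of_mem (Set.left_mem_Ico.2 one_pos)
  have hg : Tendsto g l (nhds (∑ i, w i * d i)) :=
    tendsto_finset_sum _ (fun i _ => ((hd i).const_mul (w i)))
  have hLpos : ∀ ε ∈ Set.Ioo (0:ℝ) 1, 0 < Real.log (1/ε) := by
    intro ε hε
    exact Real.log_pos (by rw [one_div]; exact (one_lt_inv₀ hε.1).2 hε.2)
  have hev : ∀ᶠ ε in l, g ε ≤ f ε := by
    filter_upwards [h01] with ε hε
    have hL := hLpos ε hε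
    have key : ∑ i, w i * Real.log (m i ε) ≤ Real.log (∑ i, w i * m i ε) := by
      have := strictConcaveOn_log_Ioi.concaveOn.le_map_sum
        (t := Finset.univ) (w := w) (p := fun i => m i ε)
        (fun i _ => hw i) hwsum (fun i _ => hm i ε hε)
      simpa using this
    calc g ε = (∑ i, w i * Real.log (m i ε)) / Real.log (1/ε) := by
          rw [Finset.sum_div]; exact Finset.sum_congr rfl (fun i _ => (mul_div_assoc _ _ _).symm)
      _ ≤ f ε := by simp only [hfdef]; gcongr
  -- upper bound function
  set h : ℝ → ℝ := fun ε => Real.log s / Real.log (1/ε)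
      + ∑ i, |Real.log (m i ε) / Real.log (1/ε)| with hhdef
  have hLtop : Tendsto (fun ε => Real.log (1/ε)) l atTop := by
    simp only [one_div, Real.log_inv]
    exact tendsto_neg_atBot_atTop.comp Real.tendsto_log_nhdsGT_zero
  have hh : Tendsto h l (nhds (0 + ∑ i, |d i|)) := by
    refine Tendsto.add ?_ (tendsto_finset_sum _ (fun i _ => (hd i).abs))
    exact Tendsto.div_atTop tendsto_const_nhds hLtop
  have hfh : ∀ᶠ ε in l, f ε ≤ h ε := by
    filter_upwards [h01] with ε hε
    have hL := hLpos ε hε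
    have hsum : ∑ i, w i * m i ε ≤ (s : ℝ) * Real.exp (∑ i, |Real.log (m i ε)|) := by
      calc ∑ i, w i * m i ε ≤ ∑ i : Fin s, Real.exp (∑ j, |Real.log (m j ε)|) := by
            refine Finset.sum_le_sum (fun i _ => ?_)
            have hw1 : w i ≤ 1 := by
              rw [← hwsum]
              exact Finset.single_le_sum (fun j _ => hw j) (Finset.mem_univ i)
            have h1 : w i * m i ε ≤ m i ε := by
              nlinarith [hm i ε hε, hw i]
            refine h1.trans ?_
            rw [← Real.exp_log (hm i ε hε)]
            refine Real.exp_le_exp.2 ?_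
            calc Real.log (m i ε) ≤ |Real.log (m i ε)| := le_abs_self _
              _ ≤ ∑ j, |Real.log (m j ε)| :=
                Finset.single_le_sum (f := fun j => |Real.log (m j ε)|) (fun j _ => abs_nonneg _) (Finset.mem_univ i)
        _ = (s : ℝ) * Real.exp (∑ i, |Real.log (m i ε)|) := by
            simp [Finset.sum_const, nsmul_eq_mul]
    have hlog : Real.log (∑ i, w i * m i ε)
        ≤ Real.log s + ∑ i, |Real.log (m i ε)| := by
      calc Real.log (∑ i, w i * m i ε)
          ≤ Real.log ((s : ℝ) * Real.exp (∑ i, |Real.log (m i ε)|)) := by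
            refine Real.log_le_log ?_ hsum
            refine Finset.sum_pos' (fun i _ => mul_nonneg (hw i) (hm i ε hε).le) ?_
            obtain ⟨i, hi⟩ : ∃ i, 0 < w i := by
              by_contra hc
              push_neg at hc
              have : ∀ i, w i = 0 := fun i => le_antisymm (hc i) (hw i)
              simp [this] at hwsum
            exact ⟨i, Finset.mem_univ i, mul_pos hi (hm i ε hε)⟩
        _ = Real.log s + ∑ i, |Real.log (m i ε)| := by
            rw [Real.log_mul (by positivity) (Real.exp_ne_zero _), Real.log_exp]
    calc f ε ≤ (Real.log s + ∑ i, |Real.log (m i ε)|) / Real.log (1/ε) := by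
          simp only [hfdef]; gcongr
      _ = h ε := by
          rw [add_div, Finset.sum_div]
          congr 1
          refine Finset.sum_congr rfl (fun i _ => ?_)
          rw [abs_div, abs_of_pos hL]
    -- done
  have hfub : IsBoundedUnder (· ≤ ·) l f := by
    refine isBoundedUnder_of_eventually_le (a := 0 + ∑ i, |d i| + 1) ?_
    filter_upwards [hfh, hh.eventually_le_const (u := 0 + ∑ i, |d i| + 1) (by linarith)] with ε h1 h2
    exact h1.trans h2
  have hflb : IsBoundedUnder (· ≥ ·) l f := by
    refine isBoundedUnder_of_eventually_ge (a := ∑ i, w i * d i - 1) ?_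
    filter_upwards [hev, hg.eventually_const_le (u := ∑ i, w i * d i - 1) (by linarith)] with ε h1 h2
    exact h2.trans h1
  calc ∑ i, w i * d i = liminf g l := hg.liminf_eq.symm
    _ ≤ liminf f l := liminf_le_liminf hev hg.isBoundedUnder_ge hfub.isCoboundedUnder_ge
end

section
/- Let Ω be a nonempty finite set, ι a nonempty finite index set, and for each i ∈ ι let 𝒫_i be a nonempty set of pmfs on Ω, with parametric complexity C(𝒫_i) and NML pmf q_{𝒫_i}. Let i* ∈ ι, let p* ∈ 𝒫_{i*}, and let î : Ω → ι satisfy q_{𝒫_{î(x)}}(x) ≥ q_{𝒫_j}(x) for all x ∈ Ω, j ∈ ι. Then for every real t > 0, Σ_{x ∈ Ω : BC(p*, q_{𝒫_{î(x)}}) < t} p*(x) ≤ Σ_{j ∈ ι : BC(p*, q_{𝒫_j}) < t} ( Σ_{x ∈ Ω : C(𝒫_{i*})·q_{𝒫_j}(x) ≥ p*(x)} p*(x) ). (Taking t = e^{−nε}, this is the union-bound decomposition of the probability that the Bhattacharyya distance of the MDL output from the truth exceeds ε.) -/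
open Classical

/-- The Bhattacharyya coefficient `BC(p,q) = Σ_x √(p(x)·q(x))`. -/
noncomputable def BC {Ω : Type*} [Fintype Ω] (p q : Ω → ℝ) : ℝ :=
  ∑ x, Real.sqrt (p x * q x)

/-- Union-bound decomposition: if `î(x)` maximizes `q_{𝒫_j}(x)` over `j`, then for every
`t > 0`, the `p*`-probability that `BC(p*, q_{𝒫_{î(x)}}) < t` is at most the sum over models
`j` with `BC(p*, q_{𝒫_j}) < t` of the `p*`-probability of `{x : C(𝒫_{i*})·q_{𝒫_j}(x) ≥ p*(x)}`. -/
theorem mdl_union_bound {Ω ι : Type*} [Fintype Ω] [Nonempty Ω] [Fintype ι] [Nonempty ι]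
    (P : ι → Set (Ω → ℝ)) (hne : ∀ i, (P i).Nonempty)
    (hpmf : ∀ i, ∀ p ∈ P i, IsPmf p)
    (istar : ι) (pstar : Ω → ℝ) (hpstar : pstar ∈ P istar)
    (ih : Ω → ι) (hih : ∀ x, ∀ j, nmlPmf (P j) x ≤ nmlPmf (P (ih x)) x) :
    ∀ t : ℝ, 0 < t →
      ∑ x ∈ Finset.univ.filter (fun x => BC pstar (nmlPmf (P (ih x))) < t), pstar x ≤
        ∑ j ∈ Finset.univ.filter (fun j => BC pstar (nmlPmf (P j)) < t),
          ∑ x ∈ Finset.univ.filter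
              (fun x => pstar x ≤ paramComplexity (P istar) * nmlPmf (P j) x), pstar x := by
  intro t ht
  have hps := hpmf istar pstar hpstar
  have hbdd : ∀ x, BddAbove (Set.range fun p : P istar => (p : Ω → ℝ) x) := by
    intro x
    refine ⟨1, ?_⟩
    rintro y ⟨⟨p, hp⟩, rfl⟩
    have hp' := hpmf istar p hp
    calc p x ≤ ∑ z, p z := Finset.single_le_sum (fun z _ => hp'.1 z) (Finset.mem_univ x)
      _ = 1 := hp'.2
  have hle : ∀ x, pstar x ≤ nmlNum (P istar) x := fun x =>
    le_ciSup (hbdd x) (⟨pstar, hpstar⟩ : P istar)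
  have hC : (1 : ℝ) ≤ paramComplexity (P istar) := by
    calc (1 : ℝ) = ∑ x, pstar x := hps.2.symm
      _ ≤ ∑ x, nmlNum (P istar) x := Finset.sum_le_sum fun x _ => hle x
      _ = paramComplexity (P istar) := rfl
  have hCpos : (0 : ℝ) < paramComplexity (P istar) := lt_of_lt_of_le one_pos hC
  have hkey : ∀ x, pstar x ≤ paramComplexity (P istar) * nmlPmf (P (ih x)) x := by
    intro x
    have h1 : pstar x ≤ paramComplexity (P istar) * nmlPmf (P istar) x := by
      unfold nmlPmf
      rw [mul_div_cancel₀ _ (ne_of_gt hCpos)]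
      exact hle x
    exact h1.trans (mul_le_mul_of_nonneg_left (hih x istar) hCpos.le)
  set S := Finset.univ.filter (fun x => BC pstar (nmlPmf (P (ih x))) < t) with hS
  set T := Finset.univ.filter (fun j => BC pstar (nmlPmf (P j)) < t) with hT
  have hmaps : ∀ x ∈ S, ih x ∈ T := by
    intro x hx
    simp only [hS, hT, Finset.mem_filter, Finset.mem_univ, true_and] at hx ⊢
    exact hx
  have hfib : ∑ j ∈ T, ∑ x ∈ S.filter (fun x => ih x = j), pstar x = ∑ x ∈ S, pstar x :=
    Finset.sum_fiberwise_of_maps_to hmaps _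
  rw [← hfib]
  refine Finset.sum_le_sum fun j hj => ?_
  refine Finset.sum_le_sum_of_subset_of_nonneg ?_ (fun x _ _ => hps.1 x)
  intro x hx
  simp only [Finset.mem_filter, Finset.mem_univ, true_and] at hx ⊢
  obtain ⟨_, hxj⟩ := hx
  rw [← hxj]
  exact hkey x
end

section
/- Let Ω be a nonempty finite set, ι a nonempty finite index set, and for each i ∈ ι let 𝒫_i be a nonempty set of pmfs on Ω, with parametric complexity C(𝒫_i) and NML pmf q_{𝒫_i}. Let i* ∈ ι, let p* ∈ 𝒫_{i*}, and let î : Ω → ι satisfy q_{𝒫_{î(x)}}(x) ≥ q_{𝒫_j}(x) for all x ∈ Ω, j ∈ ι. Then for every real n > 0 and every ε > 0, Σ_{x ∈ Ω : BC(p*, q_{𝒫_{î(x)}}) < e^{−nε}} p*(x) ≤ |ι| · √(C(𝒫_{i*})) · e^{−nε} = exp( −nε + (1/2) log C(𝒫_{i*}) + log |ι| ). That is, the p*-probability that the Bhattacharyya distance d_B^{(n)} between the NML distribution selected by the MDL learning algorithm and the true distribution exceeds ε is at most exp(−nε + (1/2) log C(𝒫_{i*}) + log |ι|). -/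
open Classical

lemma aux_nmlNum_ge {Ω : Type*} [Fintype Ω] {P : Set (Ω → ℝ)}
    (hpmf : ∀ p ∈ P, IsPmf p) {p : Ω → ℝ} (hp : p ∈ P) (x : Ω) :
    p x ≤ nmlNum P x := by
  apply le_ciSup (f := fun q : P => (q : Ω → ℝ) x) ?_ (⟨p, hp⟩ : P)
  refine ⟨1, ?_⟩
  rintro _ ⟨q, rfl⟩
  have h := hpmf q q.2
  calc (q : Ω → ℝ) x ≤ ∑ y, (q : Ω → ℝ) y :=
        Finset.single_le_sum (fun y _ => h.1 y) (Finset.mem_univ x)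
    _ = 1 := h.2

lemma aux_nmlNum_nonneg {Ω : Type*} [Fintype Ω] {P : Set (Ω → ℝ)}
    (hne : P.Nonempty) (hpmf : ∀ p ∈ P, IsPmf p) (x : Ω) : 0 ≤ nmlNum P x := by
  obtain ⟨p, hp⟩ := hne
  exact le_trans ((hpmf p hp).1 x) (aux_nmlNum_ge hpmf hp x)

lemma aux_C_ge_one {Ω : Type*} [Fintype Ω] {P : Set (Ω → ℝ)}
    (hne : P.Nonempty) (hpmf : ∀ p ∈ P, IsPmf p) : 1 ≤ paramComplexity P := by
  obtain ⟨p, hp⟩ := hne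
  calc (1:ℝ) = ∑ x, p x := ((hpmf p hp).2).symm
    _ ≤ ∑ x, nmlNum P x := Finset.sum_le_sum fun x _ => aux_nmlNum_ge hpmf hp x

/-- Exponential tail bound for MDL learning: the `p*`-probability that the Bhattacharyya
distance `d_B^{(n)}` of the selected NML distribution from the truth exceeds `ε`, i.e. that
`BC(p*, q_{𝒫_{î(x)}}) < e^{−nε}`, is at most
`|ι| · √(C(𝒫_{i*})) · e^{−nε} = exp(−nε + (1/2)·log C(𝒫_{i*}) + log |ι|)`. -/
theorem mdl_exponential_tail_bound {Ω ι : Type*} [Fintype Ω] [Nonempty Ω] [Fintype ι]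
    [Nonempty ι]
    (P : ι → Set (Ω → ℝ)) (hne : ∀ i, (P i).Nonempty)
    (hpmf : ∀ i, ∀ p ∈ P i, IsPmf p)
    (istar : ι) (pstar : Ω → ℝ) (hpstar : pstar ∈ P istar)
    (ih : Ω → ι) (hih : ∀ x, ∀ j, nmlPmf (P j) x ≤ nmlPmf (P (ih x)) x) :
    ∀ n ε : ℝ, 0 < n → 0 < ε →
      (∑ x ∈ Finset.univ.filter
          (fun x => BC pstar (nmlPmf (P (ih x))) < Real.exp (-(n * ε))), pstar x ≤
        (Fintype.card ι : ℝ) * Real.sqrt (paramComplexity (P istar)) * Real.exp (-(n * ε))) ∧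
      (Fintype.card ι : ℝ) * Real.sqrt (paramComplexity (P istar)) * Real.exp (-(n * ε)) =
        Real.exp (-(n * ε) + (1 / 2) * Real.log (paramComplexity (P istar)) +
          Real.log (Fintype.card ι)) := by
  intro n ε hn hε
  set E := Real.exp (-(n * ε)) with hE
  have hEpos : 0 < E := Real.exp_pos _
  have hpst := hpmf istar pstar hpstar
  set c := paramComplexity (P istar) with hcdef
  have hc1 : 1 ≤ c := aux_C_ge_one (hne istar) (hpmf istar)
  have hcpos : (0:ℝ) < c := lt_of_lt_of_le one_pos hc1
  have hqnn : ∀ j x, 0 ≤ nmlPmf (P j) x := fun j x =>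
    div_nonneg (aux_nmlNum_nonneg (hne j) (hpmf j) x)
      (le_trans zero_le_one (aux_C_ge_one (hne j) (hpmf j)))
  have key : ∀ x, pstar x ≤ c * nmlPmf (P (ih x)) x := by
    intro x
    have h1 : pstar x ≤ nmlNum (P istar) x := aux_nmlNum_ge (hpmf istar) hpstar x
    have h2 : nmlPmf (P istar) x ≤ nmlPmf (P (ih x)) x := hih x istar
    have h3 : pstar x / c ≤ nmlPmf (P (ih x)) x := by
      refine le_trans ?_ h2
      unfold nmlPmf
      rw [← hcdef]
      gcongr
    calc pstar x = c * (pstar x / c) := by field_simp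
      _ ≤ c * nmlPmf (P (ih x)) x := mul_le_mul_of_nonneg_left h3 hcpos.le
  have sqkey : ∀ x, pstar x ≤ Real.sqrt c * Real.sqrt (pstar x * nmlPmf (P (ih x)) x) := by
    intro x
    have h0 : pstar x * pstar x ≤ pstar x * (c * nmlPmf (P (ih x)) x) :=
      mul_le_mul_of_nonneg_left (key x) (hpst.1 x)
    have h1 := Real.sqrt_le_sqrt h0
    rwa [Real.sqrt_mul_self (hpst.1 x), show pstar x * (c * nmlPmf (P (ih x)) x)
        = c * (pstar x * nmlPmf (P (ih x)) x) by ring,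
      Real.sqrt_mul hcpos.le] at h1
  set A := Finset.univ.filter (fun x => BC pstar (nmlPmf (P (ih x))) < E) with hA
  have step1 : ∑ x ∈ A, pstar x ≤ Real.sqrt c * ∑ x ∈ A, Real.sqrt (pstar x * nmlPmf (P (ih x)) x) := by
    rw [Finset.mul_sum]
    exact Finset.sum_le_sum fun x _ => sqkey x
  have step2 : ∑ x ∈ A, Real.sqrt (pstar x * nmlPmf (P (ih x)) x) ≤ (Fintype.card ι : ℝ) * E := by
    rw [← Finset.sum_fiberwise A ih (fun x => Real.sqrt (pstar x * nmlPmf (P (ih x)) x))]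
    calc ∑ j, ∑ x ∈ A.filter (fun x => ih x = j), Real.sqrt (pstar x * nmlPmf (P (ih x)) x)
        ≤ ∑ _j : ι, E := by
          apply Finset.sum_le_sum
          intro j _
          rcases (A.filter (fun x => ih x = j)).eq_empty_or_nonempty with h | ⟨x0, hx0⟩
          · rw [h, Finset.sum_empty]; exact hEpos.le
          · have hx0' := Finset.mem_filter.mp hx0
            have hx0A := Finset.mem_filter.mp hx0'.1
            have hj : ih x0 = j := hx0'.2
            have hBC : BC pstar (nmlPmf (P j)) < E := by rw [← hj]; exact hx0A.2
            calc ∑ x ∈ A.filter (fun x => ih x = j), Real.sqrt (pstar x * nmlPmf (P (ih x)) x)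
                = ∑ x ∈ A.filter (fun x => ih x = j), Real.sqrt (pstar x * nmlPmf (P j) x) := by
                  apply Finset.sum_congr rfl
                  intro x hx
                  rw [(Finset.mem_filter.mp hx).2]
              _ ≤ ∑ x, Real.sqrt (pstar x * nmlPmf (P j) x) :=
                  Finset.sum_le_sum_of_subset_of_nonneg (Finset.subset_univ _)
                    (fun x _ _ => Real.sqrt_nonneg _)
              _ = BC pstar (nmlPmf (P j)) := rfl
              _ ≤ E := hBC.le
      _ = (Fintype.card ι : ℝ) * E := by
          rw [Finset.sum_const, Finset.card_univ, nsmul_eq_mul]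
  constructor
  · calc ∑ x ∈ A, pstar x
        ≤ Real.sqrt c * ∑ x ∈ A, Real.sqrt (pstar x * nmlPmf (P (ih x)) x) := step1
      _ ≤ Real.sqrt c * ((Fintype.card ι : ℝ) * E) :=
          mul_le_mul_of_nonneg_left step2 (Real.sqrt_nonneg _)
      _ = (Fintype.card ι : ℝ) * Real.sqrt c * E := by ring
  · have hcard : (0:ℝ) < (Fintype.card ι : ℝ) := by
      exact_mod_cast Fintype.card_pos
    have hsq : Real.sqrt c = Real.exp ((1/2) * Real.log c) := by
      rw [Real.sqrt_eq_rpow, Real.rpow_def_of_pos hcpos]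
      ring_nf
    rw [Real.exp_add, Real.exp_add, ← hE, ← hsq, Real.exp_log hcard]
    ring
end

section
/- Let Ω be a nonempty finite set, ι a nonempty finite index set, and for each i ∈ ι let 𝒫_i be a nonempty set of pmfs on Ω, with parametric complexity C(𝒫_i) and NML pmf q_{𝒫_i}. Let i* ∈ ι, let p* ∈ 𝒫_{i*}, let n > 0 be a real, and let î : Ω → ι satisfy q_{𝒫_{î(x)}}(x) ≥ q_{𝒫_j}(x) for all x ∈ Ω, j ∈ ι. Assume BC(p*, q_{𝒫_j}) > 0 for every j ∈ ι, so that d_B^{(n)}(p*, q_{𝒫_j}) is finite for every j. Then the expected Bhattacharyya distance between the output of the MDL learning algorithm and the true distribution satisfies Σ_{x∈Ω} p*(x) · d_B^{(n)}( p*, q_{𝒫_{î(x)}} ) ≤ ( (1/2)·log C(𝒫_{i*}) + log |ι| + 1 ) / n. -/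
open Classical

/-- Expected Bhattacharyya distance bound for MDL learning: if `î(x)` maximizes
`q_{𝒫_j}(x)` over `j` and all Bhattacharyya coefficients `BC(p*, q_{𝒫_j})` are positive,
then `Σ_x p*(x) · d_B^{(n)}(p*, q_{𝒫_{î(x)}}) ≤ ((1/2)·log C(𝒫_{i*}) + log |ι| + 1)/n`,
where `d_B^{(n)}(p,q) = −(1/n)·log BC(p,q)`. -/
theorem mdl_expected_bhattacharyya_bound {Ω ι : Type*} [Fintype Ω] [Nonempty Ω] [Fintype ι]
    [Nonempty ι]
    (P : ι → Set (Ω → ℝ)) (hne : ∀ i, (P i).Nonempty)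
    (hpmf : ∀ i, ∀ p ∈ P i, IsPmf p)
    (istar : ι) (pstar : Ω → ℝ) (hpstar : pstar ∈ P istar)
    (n : ℝ) (hn : 0 < n)
    (ih : Ω → ι) (hih : ∀ x, ∀ j, nmlPmf (P j) x ≤ nmlPmf (P (ih x)) x)
    (hBC : ∀ j, 0 < BC pstar (nmlPmf (P j))) :
    ∑ x, pstar x * (-(1 / n) * Real.log (BC pstar (nmlPmf (P (ih x))))) ≤
      ((1 / 2) * Real.log (paramComplexity (P istar)) + Real.log (Fintype.card ι) + 1) / n := by

  classical
  -- abbreviations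
  set C : ℝ := paramComplexity (P istar) with hCdef
  have hps : IsPmf pstar := hpmf istar pstar hpstar
  have hple : ∀ x, pstar x ≤ nmlNum (P istar) x := by
    intro x
    have hbdd : BddAbove (Set.range fun p : P istar => (p : Ω → ℝ) x) := by
      refine ⟨1, ?_⟩
      rintro y ⟨p, rfl⟩
      have hp : IsPmf (p : Ω → ℝ) := hpmf istar p p.2
      have := Finset.single_le_sum (f := (p : Ω → ℝ)) (fun y _ => hp.1 y) (Finset.mem_univ x)
      linarith [hp.2]
    exact le_ciSup hbdd ⟨pstar, hpstar⟩
  have hC1 : (1 : ℝ) ≤ C := by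
    calc (1 : ℝ) = ∑ x, pstar x := hps.2.symm
      _ ≤ ∑ x, nmlNum (P istar) x := Finset.sum_le_sum fun x _ => hple x
      _ = C := rfl
  have hC0 : (0 : ℝ) < C := lt_of_lt_of_le one_pos hC1
  have hsC0 : (0 : ℝ) < Real.sqrt C := Real.sqrt_pos.mpr hC0
  -- lower bound on the selected NML pmf
  have hqlow : ∀ y, pstar y / C ≤ nmlPmf (P (ih y)) y := by
    intro y
    refine le_trans ?_ (hih y istar)
    unfold nmlPmf
    rw [← hCdef]
    gcongr
    exact hple y
  -- weights of the fibers
  set w : ι → ℝ := fun j => ∑ x ∈ Finset.univ.filter (fun x => ih x = j), pstar x with hwdef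
  have hwnn : ∀ j, 0 ≤ w j := fun j => Finset.sum_nonneg fun x _ => hps.1 x
  -- lower bound on the Bhattacharyya coefficients
  have hBClow : ∀ j, w j / Real.sqrt C ≤ BC pstar (nmlPmf (P j)) := by
    intro j
    have h1 : ∑ x ∈ Finset.univ.filter (fun x => ih x = j), pstar x / Real.sqrt C
        ≤ ∑ x ∈ Finset.univ.filter (fun x => ih x = j),
            Real.sqrt (pstar x * nmlPmf (P j) x) := by
      refine Finset.sum_le_sum ?_
      intro x hx
      have hxj : ih x = j := (Finset.mem_filter.mp hx).2
      have h2 : pstar x / C ≤ nmlPmf (P j) x := hxj ▸ hqlow x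
      have h3 : pstar x * (pstar x / C) ≤ pstar x * nmlPmf (P j) x :=
        mul_le_mul_of_nonneg_left h2 (hps.1 x)
      have h4 : pstar x * (pstar x / C) = pstar x ^ 2 / C := by ring
      calc pstar x / Real.sqrt C = Real.sqrt (pstar x ^ 2) / Real.sqrt C := by
            rw [Real.sqrt_sq (hps.1 x)]
        _ = Real.sqrt (pstar x ^ 2 / C) := (Real.sqrt_div (sq_nonneg _) C).symm
        _ ≤ Real.sqrt (pstar x * nmlPmf (P j) x) := Real.sqrt_le_sqrt (by rw [← h4]; exact h3)
    have h5 : ∑ x ∈ Finset.univ.filter (fun x => ih x = j),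
          Real.sqrt (pstar x * nmlPmf (P j) x) ≤ BC pstar (nmlPmf (P j)) := by
      unfold BC
      exact Finset.sum_le_sum_of_subset_of_nonneg (Finset.filter_subset _ _)
        (fun x _ _ => Real.sqrt_nonneg _)
    calc w j / Real.sqrt C
        = ∑ x ∈ Finset.univ.filter (fun x => ih x = j), pstar x / Real.sqrt C := by
          rw [hwdef]; exact Finset.sum_div ..
      _ ≤ _ := le_trans h1 h5
  have hterm : ∀ j, w j / BC pstar (nmlPmf (P j)) ≤ Real.sqrt C := by
    intro j
    rw [div_le_iff₀ (hBC j)]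
    have := hBClow j
    rw [div_le_iff₀ hsC0] at this
    linarith [this]
  -- total sum bound
  have hsum : ∑ x, pstar x * (BC pstar (nmlPmf (P (ih x))))⁻¹
      ≤ (Fintype.card ι : ℝ) * Real.sqrt C := by
    have hfib : ∑ x, pstar x * (BC pstar (nmlPmf (P (ih x))))⁻¹
        = ∑ j, ∑ x ∈ Finset.univ.filter (fun x => ih x = j),
            pstar x * (BC pstar (nmlPmf (P (ih x))))⁻¹ :=
      (Finset.sum_fiberwise Finset.univ ih _).symm
    rw [hfib]
    have : ∀ j, ∑ x ∈ Finset.univ.filter (fun x => ih x = j),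
        pstar x * (BC pstar (nmlPmf (P (ih x))))⁻¹ ≤ Real.sqrt C := by
      intro j
      have heq : ∑ x ∈ Finset.univ.filter (fun x => ih x = j),
          pstar x * (BC pstar (nmlPmf (P (ih x))))⁻¹
          = w j * (BC pstar (nmlPmf (P j)))⁻¹ := by
        rw [hwdef, Finset.sum_mul]
        refine Finset.sum_congr rfl ?_
        intro x hx
        rw [(Finset.mem_filter.mp hx).2]
      rw [heq, ← div_eq_mul_inv]
      exact hterm j
    calc ∑ j, ∑ x ∈ Finset.univ.filter (fun x => ih x = j),
          pstar x * (BC pstar (nmlPmf (P (ih x))))⁻¹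
        ≤ ∑ _j : ι, Real.sqrt C := Finset.sum_le_sum fun j _ => this j
      _ = (Fintype.card ι : ℝ) * Real.sqrt C := by
          rw [Finset.sum_const, Finset.card_univ, nsmul_eq_mul]
  -- positivity of the averaged sum
  have hpos : 0 < ∑ x, pstar x * (BC pstar (nmlPmf (P (ih x))))⁻¹ := by
    obtain ⟨x0, hx0⟩ : ∃ x, (0:ℝ) < pstar x := by
      by_contra h
      push_neg at h
      have : ∑ x, pstar x ≤ 0 := Finset.sum_nonpos fun x _ => h x
      rw [hps.2] at this; linarith
    refine Finset.sum_pos' (fun x _ => mul_nonneg (hps.1 x) (inv_nonneg.mpr (hBC _).le))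
      ⟨x0, Finset.mem_univ x0, mul_pos hx0 (inv_pos.mpr (hBC _))⟩
  -- Jensen's inequality
  have hjensen : ∑ x, pstar x * Real.log ((BC pstar (nmlPmf (P (ih x))))⁻¹)
      ≤ Real.log (∑ x, pstar x * (BC pstar (nmlPmf (P (ih x))))⁻¹) := by
    have hconc : ConcaveOn ℝ (Set.Ioi 0) Real.log := strictConcaveOn_log_Ioi.concaveOn
    have := hconc.le_map_sum (t := Finset.univ) (w := pstar)
      (p := fun x => (BC pstar (nmlPmf (P (ih x))))⁻¹)
      (fun x _ => hps.1 x) hps.2 (fun x _ => Set.mem_Ioi.mpr (inv_pos.mpr (hBC _)))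
    simpa [smul_eq_mul] using this
  have hcard1 : (1:ℝ) ≤ (Fintype.card ι : ℝ) := by
    exact_mod_cast Fintype.card_pos
  have hlog2 : Real.log (∑ x, pstar x * (BC pstar (nmlPmf (P (ih x))))⁻¹)
      ≤ Real.log ((Fintype.card ι : ℝ) * Real.sqrt C) := Real.log_le_log hpos hsum
  have hlog3 : Real.log ((Fintype.card ι : ℝ) * Real.sqrt C)
      = Real.log (Fintype.card ι) + (1/2) * Real.log C := by
    rw [Real.log_mul (by positivity) (ne_of_gt hsC0), Real.log_sqrt hC0.le]
    ring
  -- combine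
  have key : ∑ x, pstar x * Real.log ((BC pstar (nmlPmf (P (ih x))))⁻¹)
      ≤ (1/2) * Real.log C + Real.log (Fintype.card ι) + 1 := by
    have := le_trans hjensen hlog2
    rw [hlog3] at this
    linarith
  have hrw : ∑ x, pstar x * (-(1 / n) * Real.log (BC pstar (nmlPmf (P (ih x)))))
      = (1/n) * ∑ x, pstar x * Real.log ((BC pstar (nmlPmf (P (ih x))))⁻¹) := by
    rw [Finset.mul_sum]
    refine Finset.sum_congr rfl ?_
    intro x _
    rw [Real.log_inv]
    ring
  rw [hrw]
  have hn' : (0:ℝ) < 1/n := by positivity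
  calc (1/n) * ∑ x, pstar x * Real.log ((BC pstar (nmlPmf (P (ih x))))⁻¹)
      ≤ (1/n) * ((1/2) * Real.log C + Real.log (Fintype.card ι) + 1) :=
        mul_le_mul_of_nonneg_left key hn'.le
    _ = ((1/2) * Real.log C + Real.log (Fintype.card ι) + 1) / n := by
        ring
end

section
/- Let Ω be a nonempty finite set, ι a nonempty finite index set, and for each i ∈ ι let 𝒫_i be a nonempty set of pmfs on Ω, with parametric complexity C(𝒫_i) and NML pmf q_{𝒫_i}. Let π : ι → ℝ be a probability vector (π_i ≥ 0, Σ_i π_i = 1) over the model family, for each i ∈ ι let p*_i ∈ 𝒫_i be a true pmf of model i, let n > 0 be a real, and for each i let î_i : Ω → ι be a selection map satisfying q_{𝒫_{î_i(x)}}(x) ≥ q_{𝒫_j}(x) for all x ∈ Ω, j ∈ ι. Assume BC(p*_i, q_{𝒫_j}) > 0 for all i, j ∈ ι. Then the model-averaged expected Bhattacharyya distance between the output of the MDL learning algorithm and the true distribution satisfies Σ_{i∈ι} π_i · Σ_{x∈Ω} p*_i(x) · d_B^{(n)}( p*_i, q_{𝒫_{î_i(x)}} ) ≤ ( Σ_{i∈ι}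 π_i·(1/2)·log C(𝒫_i) + log |ι| + 1 ) / n. -/
/-!
Fix the true model `i`, with true pmf `p = p*_i` and `C = C(𝒫_i)`. Since `p ≤ sup_{𝒫_i}`,
`p(x)/C ≤ q_{𝒫_i}(x) ≤ q_{𝒫_{î(x)}}(x)`, so if `m_j` is the `p`-mass of the fiber `{x | î(x) = j}`,
then `BC(p, q_{𝒫_j}) ≥ m_j / √C`. Grouping the expectation by fibers,
`E_p[-log BC(p, q_{𝒫_î})] ≤ Σ_j m_j (-log m_j) + ½ log C ≤ log |ι| + ½ log C`, since an entropy is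
at most the log of the alphabet size. Averaging over `π` and dividing by `n` gives the bound.
-/

open Classical

open Finset Real

section Likelihood

variable {Ω : Type*} [Fintype Ω]

theorem IsPmf.le_one {p : Ω → ℝ} (hp : IsPmf p) (x : Ω) : p x ≤ 1 := by
  simpa [hp.2] using single_le_sum (fun y _ => hp.1 y) (mem_univ x)

theorem le_nmlNum {P : Set (Ω → ℝ)} (hP : ∀ p ∈ P, IsPmf p) {p : Ω → ℝ} (hp : p ∈ P)
    (x : Ω) : p x ≤ nmlNum P x :=
  le_ciSup (f := fun q : P => (q : Ω → ℝ) x)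
    ⟨1, by rintro _ ⟨q, rfl⟩; exact (hP q q.2).le_one x⟩ ⟨p, hp⟩

theorem one_le_paramComplexity {P : Set (Ω → ℝ)} (hP : ∀ p ∈ P, IsPmf p) {p : Ω → ℝ}
    (hp : p ∈ P) : 1 ≤ paramComplexity P :=
  (hP p hp).2.symm.trans_le (sum_le_sum fun x _ => le_nmlNum hP hp x)

theorem div_paramComplexity_le_nmlPmf {P : Set (Ω → ℝ)} (hP : ∀ p ∈ P, IsPmf p) {p : Ω → ℝ}
    (hp : p ∈ P) (x : Ω) : p x / paramComplexity P ≤ nmlPmf P x :=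
  div_le_div_of_nonneg_right (le_nmlNum hP hp x)
    (zero_le_one.trans (one_le_paramComplexity hP hp))

theorem sum_div_sqrt_le_BC {p q : Ω → ℝ} {s : Finset Ω} {c : ℝ} (hp : ∀ x, 0 ≤ p x)
    (hpq : ∀ x ∈ s, p x / c ≤ q x) : (∑ x ∈ s, p x) / √c ≤ BC p q := by
  have hpoint : ∀ x ∈ s, p x / √c ≤ √(p x * q x) := fun x hx =>
    calc p x / √c = √(p x ^ 2 / c) := by rw [sqrt_div (sq_nonneg _), sqrt_sq (hp x)]
      _ = √(p x * (p x / c)) := by ring_nf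
      _ ≤ √(p x * q x) := sqrt_le_sqrt (mul_le_mul_of_nonneg_left (hpq x hx) (hp x))
  rw [sum_div]
  exact (sum_le_sum hpoint).trans
    (sum_le_sum_of_subset_of_nonneg (subset_univ s) fun x _ _ => sqrt_nonneg _)

end Likelihood

theorem negMulLog_le_inv_add_mul_log_sub_one {t m : ℝ} (ht : 0 ≤ t) (hm : 0 < m) :
    negMulLog t ≤ m⁻¹ + t * (log m - 1) := by
  have h := negMulLog_le_one_sub_self (mul_nonneg ht hm.le)
  rw [negMulLog_mul] at h
  rw [← mul_le_mul_iff_of_pos_left hm, mul_add, mul_inv_cancel₀ hm.ne']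
  simp only [negMulLog] at h ⊢
  linarith

theorem sum_negMulLog_le_log_card {ι : Type*} [Fintype ι] {m : ι → ℝ} (hm : ∀ j, 0 ≤ m j)
    (hsum : ∑ j, m j = 1) : ∑ j, negMulLog (m j) ≤ log (Fintype.card ι) := by
  have hcard : (0 : ℝ) < Fintype.card ι := by
    have : Nonempty ι := by
      by_contra h
      simp [not_nonempty_iff.mp h] at hsum
    exact_mod_cast Fintype.card_pos
  calc ∑ j, negMulLog (m j) ≤ ∑ j, ((Fintype.card ι : ℝ)⁻¹ + m j * (log (Fintype.card ι) - 1)) :=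
        sum_le_sum fun j _ => negMulLog_le_inv_add_mul_log_sub_one (hm j) hcard
    _ = log (Fintype.card ι) := by
        rw [sum_add_distrib, ← sum_mul, hsum, sum_const, card_univ, nsmul_eq_mul,
          mul_inv_cancel₀ hcard.ne']
        ring

theorem mul_neg_log_le_negMulLog_add_mul_log {t b c : ℝ} (ht : 0 ≤ t) (hc : 0 < c)
    (hb : t / c ≤ b) : t * -log b ≤ negMulLog t + t * log c := by
  rcases ht.eq_or_lt with rfl | ht
  · simp
  have hlog : log t - log c ≤ log b := by
    rw [← log_div ht.ne' hc.ne']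
    exact log_le_log (div_pos ht hc) hb
  rw [negMulLog]
  nlinarith

section Fibers

variable {Ω ι : Type*} [Fintype Ω] [Fintype ι]

theorem sum_mul_comp_eq_sum_fiber_mass (p : Ω → ℝ) (s : Ω → ι) (f : ι → ℝ) :
    ∑ x, p x * f (s x) = ∑ j, (∑ x with s x = j, p x) * f j := by
  rw [← sum_fiberwise univ s]
  refine sum_congr rfl fun j _ => ?_
  rw [sum_mul]
  exact sum_congr rfl fun x hx => by rw [(mem_filter.mp hx).2]

theorem sum_fiber_mass_eq_one {p : Ω → ℝ} (hp : IsPmf p) (s : Ω → ι) :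
    ∑ j, ∑ x with s x = j, p x = 1 := by
  rw [sum_fiberwise univ s, hp.2]

theorem sum_mul_neg_log_BC_le {p : Ω → ℝ} (hp : IsPmf p) {q : ι → Ω → ℝ} {s : Ω → ι}
    {C : ℝ} (hC : 0 < C) (hs : ∀ x, p x / C ≤ q (s x) x) :
    ∑ x, p x * -log (BC p (q (s x))) ≤ 1 / 2 * log C + log (Fintype.card ι) := by
  set m : ι → ℝ := fun j => ∑ x with s x = j, p x
  have hm : ∀ j, 0 ≤ m j := fun j => sum_nonneg fun x _ => hp.1 x
  have hBC : ∀ j, m j / √C ≤ BC p (q j) := fun j =>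
    sum_div_sqrt_le_BC hp.1 fun x hx => (mem_filter.mp hx).2 ▸ hs x
  calc ∑ x, p x * -log (BC p (q (s x))) = ∑ j, m j * -log (BC p (q j)) :=
        sum_mul_comp_eq_sum_fiber_mass p s fun j => -log (BC p (q j))
    _ ≤ ∑ j, (negMulLog (m j) + m j * log √C) := sum_le_sum fun j _ =>
        mul_neg_log_le_negMulLog_add_mul_log (hm j) (sqrt_pos.mpr hC) (hBC j)
    _ = ∑ j, negMulLog (m j) + 1 / 2 * log C := by
        rw [sum_add_distrib, ← sum_mul, sum_fiber_mass_eq_one hp s, log_sqrt hC.le]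
        ring
    _ ≤ 1 / 2 * log C + log (Fintype.card ι) := by
        linarith [sum_negMulLog_le_log_card hm (sum_fiber_mass_eq_one hp s)]

end Fibers

theorem mdl_model_fusion_expected_bhattacharyya_bound_general {Ω ι : Type*} [Fintype Ω]
    [Fintype ι]
    (P : ι → Set (Ω → ℝ))
    (hpmf : ∀ i, ∀ p ∈ P i, IsPmf p)
    (w : ι → ℝ) (hw : ∀ i, 0 ≤ w i) (hwsum : ∑ i, w i = 1)
    (pstar : ι → Ω → ℝ) (hpstar : ∀ i, pstar i ∈ P i)
    (n : ℝ) (hn : 0 < n)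
    (ih : ι → Ω → ι) (hih : ∀ i, ∀ x, ∀ j, nmlPmf (P j) x ≤ nmlPmf (P (ih i x)) x) :
    ∑ i, w i * ∑ x, pstar i x * (-(1 / n) * Real.log (BC (pstar i) (nmlPmf (P (ih i x))))) ≤
      (∑ i, w i * ((1 / 2) * Real.log (paramComplexity (P i))) +
        Real.log (Fintype.card ι) + 1) / n := by
  have hmodel : ∀ i, ∑ x, pstar i x * -log (BC (pstar i) (nmlPmf (P (ih i x)))) ≤
      1 / 2 * log (paramComplexity (P i)) + log (Fintype.card ι) := fun i =>
    sum_mul_neg_log_BC_le (q := fun j => nmlPmf (P j)) (hpmf i _ (hpstar i))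
      (zero_lt_one.trans_le (one_le_paramComplexity (hpmf i) (hpstar i)))
      fun x => (div_paramComplexity_le_nmlPmf (hpmf i) (hpstar i) x).trans (hih i x i)
  calc ∑ i, w i * ∑ x, pstar i x * (-(1 / n) * log (BC (pstar i) (nmlPmf (P (ih i x)))))
      = (∑ i, w i * ∑ x, pstar i x * -log (BC (pstar i) (nmlPmf (P (ih i x))))) / n := by
        simp only [sum_div, mul_sum]
        exact sum_congr rfl fun i _ => sum_congr rfl fun x _ => by ring
    _ ≤ (∑ i, w i * (1 / 2 * log (paramComplexity (P i)) + log (Fintype.card ι))) / n :=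
        div_le_div_of_nonneg_right
          (sum_le_sum fun i _ => mul_le_mul_of_nonneg_left (hmodel i) (hw i)) hn.le
    _ ≤ _ := by
        rw [sum_congr rfl fun i _ => mul_add (w i) _ _, sum_add_distrib, ← sum_mul, hwsum]
        exact div_le_div_of_nonneg_right (by linarith) hn.le

/-- Model-fusion (model-averaged) expected Bhattacharyya distance bound for MDL learning:
if the true model index is drawn from the family `{𝒫_i}` according to a probability vector
`π`, the true pmf of model `i` is `p*_i ∈ 𝒫_i`, and for each `i` the selection map `î_i(x)`
maximizes `q_{𝒫_j}(x)` over `j`, then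
`Σ_i π_i Σ_x p*_i(x)·d_B^{(n)}(p*_i, q_{𝒫_{î_i(x)}})
  ≤ (Σ_i π_i·(1/2)·log C(𝒫_i) + log |ι| + 1)/n`,
where `d_B^{(n)}(p,q) = −(1/n)·log BC(p,q)`. -/
theorem mdl_model_fusion_expected_bhattacharyya_bound {Ω ι : Type*} [Fintype Ω] [Nonempty Ω]
    [Fintype ι] [Nonempty ι]
    (P : ι → Set (Ω → ℝ)) (hne : ∀ i, (P i).Nonempty)
    (hpmf : ∀ i, ∀ p ∈ P i, IsPmf p)
    (w : ι → ℝ) (hw : ∀ i, 0 ≤ w i) (hwsum : ∑ i, w i = 1)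
    (pstar : ι → Ω → ℝ) (hpstar : ∀ i, pstar i ∈ P i)
    (n : ℝ) (hn : 0 < n)
    (ih : ι → Ω → ι) (hih : ∀ i, ∀ x, ∀ j, nmlPmf (P j) x ≤ nmlPmf (P (ih i x)) x)
    (hBC : ∀ i j, 0 < BC (pstar i) (nmlPmf (P j))) :
    ∑ i, w i * ∑ x, pstar i x * (-(1 / n) * Real.log (BC (pstar i) (nmlPmf (P (ih i x))))) ≤
      (∑ i, w i * ((1 / 2) * Real.log (paramComplexity (P i))) +
        Real.log (Fintype.card ι) + 1) / n :=
  mdl_model_fusion_expected_bhattacharyya_bound_general P hpmf w hw hwsum pstar hpstar n hn ih hih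
end
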